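/- arXiv:1306.3906 — 2 statements merged into one kernel-verified Lean document; each statement's English description precedes it below -/
import Mathlib

section
/- (Lemma) Let h be a history in SI and let h_s = S(h) be an extended history of h satisfying rules D1 and D2. For all transactions T_i and T_j in h, if T_i → T_j (T_i snapshot-precedes T_j), then s_i <_{h_s} s_j. -/
open scoped Classical

/-- Operations of a transactional history: `read i x j` means transaction `i` reads
version `j` of object `x` (`j = none` encodes the distinguished initial version `x₀`),
`write i x` means transaction `i` writes version `i` of object `x`,
`commit i` / `abort i` are the terminating operations of transaction `i`. -/
inductive Op (Obj Trans : Type) : Type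
  | read   (i : Trans) (x : Obj) (j : Option Trans)
  | write  (i : Trans) (x : Obj)
  | commit (i : Trans)
  | abort  (i : Trans)

namespace Op

variable {Obj Trans : Type}

/-- The transaction an operation belongs to. -/
def txn : Op Obj Trans → Trans
  | .read i _ _ => i
  | .write i _ => i
  | .commit i => i
  | .abort i => i

/-- The object accessed by an operation (if any). -/
def obj? : Op Obj Trans → Option Obj
  | .read _ x _ => some x
  | .write _ x => some x
  | _ => none

/-- Renaming the objects of an operation along a map `p` (e.g. a partition map). -/
def mapObj {β : Type} (p : Obj → β) : Op Obj Trans → Op β Trans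
  | .read i x j => .read i (p x) j
  | .write i x => .write i (p x)
  | .commit i => .commit i
  | .abort i => .abort i

end Op

/-- The raw data of a history: a set of operations together with a relation `<ₕ`. -/
structure PreHistory (Obj Trans : Type) : Type where
  ops : Set (Op Obj Trans)
  lt : Op Obj Trans → Op Obj Trans → Prop

namespace PreHistory

variable {Obj Trans : Type}

/-- Transaction `i` appears in the history `h`. -/
def inH (h : PreHistory Obj Trans) (i : Trans) : Prop :=
  ∃ o ∈ h.ops, Op.txn o = i

/-- Transaction `i` is committed in `h`. -/
def committed (h : PreHistory Obj Trans) (i : Trans) : Prop :=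
  Op.commit i ∈ h.ops

/-- The version order `≪ₕ` on the versions of object `x`
(`none` is the initial version `x₀`). -/
def verOrd (h : PreHistory Obj Trans) (x : Obj) (v w : Option Trans) : Prop :=
  match v, w with
  | none, some k => Op.write k x ∈ h.ops
  | some j, some k => h.lt (Op.write j x) (Op.write k x)
  | _, none => False

/-- `T i` reads-from `T j`: `i` reads some version written by `j`. -/
def readsFrom (h : PreHistory Obj Trans) (i j : Trans) : Prop :=
  ∃ x : Obj, Op.read i x (some j) ∈ h.ops

/-- `T i` depends on `T j`: transitive closure of reads-from. -/
def dependsOn (h : PreHistory Obj Trans) : Trans → Trans → Prop :=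
  Relation.TransGen h.readsFrom

/-- ACA (avoiding cascading aborts): every read of a non-initial version is
preceded by the corresponding commit. -/
def ACA (h : PreHistory Obj Trans) : Prop :=
  ∀ (i j : Trans) (x : Obj), Op.read i x (some j) ∈ h.ops →
    Op.commit j ∈ h.ops ∧ h.lt (Op.commit j) (Op.read i x (some j))

/-- Transaction `i` sees a consistent snapshot in `h`: there are no `T k` and object `x`
such that `T i` reads `x_j`, `T i` depends on `T k`, `T k` writes `x_k` and `x_j ≪ₕ x_k`. -/
def seesConsistent (h : PreHistory Obj Trans) (i : Trans) : Prop :=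
  ¬ ∃ (k : Trans) (x : Obj) (j : Option Trans),
      Op.read i x j ∈ h.ops ∧ h.dependsOn i k ∧
      Op.write k x ∈ h.ops ∧ h.verOrd x j (some k)

/-- CONS (consistent snapshots). -/
def CONS (h : PreHistory Obj Trans) : Prop :=
  ∀ i : Trans, h.seesConsistent i

/-- SCONSa. -/
def SCONSa (h : PreHistory Obj Trans) : Prop :=
  ¬ ∃ (i j l : Trans) (x y : Obj),
      Op.read i x (some j) ∈ h.ops ∧ Op.read i y (some l) ∈ h.ops ∧
      h.lt (Op.read i x (some j)) (Op.commit l)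

/-- SCONSb. -/
def SCONSb (h : PreHistory Obj Trans) : Prop :=
  ¬ ∃ (i j k l : Trans) (x y : Obj),
      k ≠ j ∧
      Op.read i x (some j) ∈ h.ops ∧ Op.read i y (some l) ∈ h.ops ∧
      Op.write k x ∈ h.ops ∧
      h.lt (Op.commit k) (Op.commit l) ∧ ¬ h.lt (Op.commit k) (Op.commit j)

/-- SCONS (strictly consistent snapshots). -/
def SCONS (h : PreHistory Obj Trans) : Prop :=
  h.CONS ∧ h.SCONSa ∧ h.SCONSb

/-- WCF (write-conflict freedom): any two distinct committed transactions writing a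
common object are dependent one on the other. -/
def WCF (h : PreHistory Obj Trans) : Prop :=
  ∀ (i j : Trans) (x : Obj), i ≠ j →
    Op.commit i ∈ h.ops → Op.commit j ∈ h.ops →
    Op.write i x ∈ h.ops → Op.write j x ∈ h.ops →
    h.dependsOn i j ∨ h.dependsOn j i

/-- Snapshot precedence `T i → T j`. -/
def snapPrec (h : PreHistory Obj Trans) (i j : Trans) : Prop :=
  ∃ (k l : Trans) (x y : Obj),
    Op.read i x (some k) ∈ h.ops ∧ Op.read j y (some l) ∈ h.ops ∧
    (h.lt (Op.read i x (some k)) (Op.commit l) ∨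
      (Op.write l x ∈ h.ops ∧ h.lt (Op.commit k) (Op.commit l)))

/-- MON (monotonic snapshots): snapshot precedence is acyclic. -/
def MON (h : PreHistory Obj Trans) : Prop :=
  ∀ i : Trans, ¬ Relation.TransGen h.snapPrec i i

/-- NMSI (non-monotonic snapshot isolation). -/
def NMSI (h : PreHistory Obj Trans) : Prop :=
  h.ACA ∧ h.CONS ∧ h.WCF

/-- `p : Obj → β` is a proper partition for `h`: any two distinct writes on objects of
the same block are ordered by `<ₕ`. -/
def ProperPartition {β : Type} (h : PreHistory Obj Trans) (p : Obj → β) : Prop :=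
  ∀ (i j : Trans) (x y : Obj), Op.write i x ∈ h.ops → Op.write j y ∈ h.ops →
    p x = p y → (Op.write i x : Op Obj Trans) ≠ Op.write j y →
    h.lt (Op.write i x) (Op.write j y) ∨ h.lt (Op.write j y) (Op.write i x)

/-- The history `h^P` obtained by replacing every operation on `x` by the same
operation on the block `p x`. -/
def quot {β : Type} (h : PreHistory Obj Trans) (p : Obj → β) : PreHistory β Trans where
  ops := Op.mapObj p '' h.ops
  lt a b := ∃ o₁ ∈ h.ops, ∃ o₂ ∈ h.ops,
    Op.mapObj p o₁ = a ∧ Op.mapObj p o₂ = b ∧ h.lt o₁ o₂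

end PreHistory

/-- A history: a set of operations with a strict partial order satisfying the
structural conditions of the model. -/
structure History (Obj Trans : Type) extends PreHistory Obj Trans where
  lt_irrefl : ∀ o, ¬ lt o o
  lt_trans : ∀ a b c, lt a b → lt b c → lt a c
  lt_mem : ∀ a b, lt a b → a ∈ ops ∧ b ∈ ops
  /-- (3) every read of a non-initial version is preceded by the corresponding write. -/
  read_after_write : ∀ (i j : Trans) (x : Obj), Op.read i x (some j) ∈ ops →
    Op.write j x ∈ ops ∧ lt (Op.write j x) (Op.read i x (some j))
  /-- (4) any two distinct writes on the same object are ordered. -/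
  writes_ordered : ∀ (i j : Trans) (x : Obj), Op.write i x ∈ ops → Op.write j x ∈ ops →
    i ≠ j → lt (Op.write i x) (Op.write j x) ∨ lt (Op.write j x) (Op.write i x)
  /-- every write is preceded, in the same transaction, by a read on the same object. -/
  write_after_read : ∀ (i : Trans) (x : Obj), Op.write i x ∈ ops →
    ∃ j : Option Trans, Op.read i x j ∈ ops ∧ lt (Op.read i x j) (Op.write i x)
  /-- program order: the terminating operation comes last. -/
  before_commit : ∀ (i : Trans) (o : Op Obj Trans), o ∈ ops → Op.txn o = i →
    o ≠ Op.commit i → o ≠ Op.abort i → Op.commit i ∈ ops → lt o (Op.commit i)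
  before_abort : ∀ (i : Trans) (o : Op Obj Trans), o ∈ ops → Op.txn o = i →
    o ≠ Op.commit i → o ≠ Op.abort i → Op.abort i ∈ ops → lt o (Op.abort i)
  /-- each object is read at most once by a transaction. -/
  read_unique : ∀ (i : Trans) (x : Obj) (j j' : Option Trans),
    Op.read i x j ∈ ops → Op.read i x j' ∈ ops → j = j'
  /-- a transaction does not both commit and abort. -/
  commit_not_abort : ∀ i : Trans, Op.commit i ∈ ops → Op.abort i ∉ ops

/-- Points of an extended history: the operations of the base history plus one
snapshot point per transaction. -/
inductive ExtPoint (Obj Trans : Type) : Type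
  | op (o : Op Obj Trans)
  | snap (i : Trans)

/-- An extended history of `h`, with snapshot points placed before every operation of
their transaction, satisfying the read rule D1 and the write rule D2 of
snapshot isolation. -/
structure SIWitness {Obj Trans : Type} (h : History Obj Trans) : Type where
  slt : ExtPoint Obj Trans → ExtPoint Obj Trans → Prop
  slt_irrefl : ∀ a, ¬ slt a a
  slt_trans : ∀ a b c, slt a b → slt b c → slt a c
  /-- the extended order extends `<ₕ`. -/
  extends_lt : ∀ a b, h.lt a b → slt (.op a) (.op b)
  /-- the snapshot point of `T i` precedes every operation of `T i`. -/
  snap_first : ∀ (i : Trans) (o : Op Obj Trans), o ∈ h.ops → Op.txn o = i →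
    slt (.snap i) (.op o)
  /-- D1.1 -/
  d11 : ∀ (i j : Trans) (x : Obj), Op.read i x (some j) ∈ h.ops → j ≠ i →
    Op.commit j ∈ h.ops
  /-- D1.2 -/
  d12 : ∀ (i j : Trans) (x : Obj), Op.read i x (some j) ∈ h.ops → j ≠ i →
    slt (.op (Op.commit j)) (.snap i)
  /-- D1.3 -/
  d13 : ∀ (i j k : Trans) (x : Obj), Op.read i x (some j) ∈ h.ops → j ≠ i →
    k ≠ i → k ≠ j → Op.write k x ∈ h.ops → Op.commit k ∈ h.ops →
    slt (.op (Op.commit k)) (.op (Op.commit j)) ∨ slt (.snap i) (.op (Op.commit k))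
  /-- D2 -/
  d2 : ∀ (i j : Trans) (x : Obj), i ≠ j →
    Op.commit i ∈ h.ops → Op.commit j ∈ h.ops →
    Op.write i x ∈ h.ops → Op.write j x ∈ h.ops →
    slt (.op (Op.commit i)) (.snap j) ∨ slt (.op (Op.commit j)) (.snap i)

/-- A history is in SI when it admits an extended history satisfying D1 and D2. -/
def SI {Obj Trans : Type} (h : History Obj Trans) : Prop :=
  Nonempty (SIWitness h)

/-- A dependence-vector function for the history `h`. -/
structure DepVec {Obj Trans : Type} (h : History Obj Trans) : Type where
  dv : Op Obj Trans → Obj → ℕ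
  dv_read_init : ∀ (i : Trans) (x : Obj), Op.read i x none ∈ h.ops →
    dv (Op.read i x none) = fun _ => 0
  dv_read : ∀ (i j : Trans) (x : Obj), Op.read i x (some j) ∈ h.ops →
    dv (Op.read i x (some j)) = dv (Op.write j x)
  dv_write : ∀ (i : Trans) (x : Obj), Op.write i x ∈ h.ops → ∀ z : Obj,
    dv (Op.write i x) z =
      sSup { n : ℕ | ∃ (y : Obj) (v : Option Trans),
              Op.read i y v ∈ h.ops ∧ dv (Op.read i y v) z = n }
        + (if Op.write i z ∈ h.ops then 1 else 0)

/-- `o₁ ≤ₕ^P o₂` : equality, or `o₁ <ₕ o₂` with both operations on objects of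
the same block of the partition `p`. -/
def leP {Obj β Trans : Type} (p : Obj → β) (h : PreHistory Obj Trans)
    (o₁ o₂ : Op Obj Trans) : Prop :=
  o₁ = o₂ ∨ (h.lt o₁ o₂ ∧ ∃ x y : Obj, o₁.obj? = some x ∧ o₂.obj? = some y ∧ p x = p y)

/-- A partitioned dependence-vector function for the history `h` and partition `p`. -/
structure PDepVec {Obj β Trans : Type} (p : Obj → β) (h : History Obj Trans) : Type where
  pdv : Op Obj Trans → β → ℕ
  pdv_read_init : ∀ (i : Trans) (x : Obj), Op.read i x none ∈ h.ops →
    pdv (Op.read i x none) = fun _ => 0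
  pdv_read : ∀ (i j : Trans) (x : Obj), Op.read i x (some j) ∈ h.ops → ∀ X : β,
    pdv (Op.read i x (some j)) X =
      sSup { n : ℕ | ∃ (l : Trans) (y : Obj), Op.write l y ∈ h.ops ∧
              leP p h.toPreHistory (Op.write l y) (Op.read i x (some j)) ∧
              (∀ k : Trans, h.toPreHistory.verOrd x (some j) (some k) →
                leP p h.toPreHistory (Op.write l y) (Op.write k x)) ∧
              pdv (Op.write l y) X = n }
  pdv_write : ∀ (i : Trans) (x : Obj), Op.write i x ∈ h.ops → ∀ X : β,
    pdv (Op.write i x) X =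
      sSup ({ n : ℕ | ∃ (y : Obj) (v : Option Trans),
                Op.read i y v ∈ h.ops ∧ pdv (Op.read i y v) X = n } ∪
            { n : ℕ | ∃ (k : Trans) (z : Obj), Op.write k z ∈ h.ops ∧
                leP p h.toPreHistory (Op.write k z) (Op.write i x) ∧
                (Op.write k z : Op Obj Trans) ≠ Op.write i x ∧
                pdv (Op.write k z) X = n })
        + (if ∃ z : Obj, Op.write i z ∈ h.ops ∧ p z = X then 1 else 0)

/-- `y_l` is the maximal (w.r.t. the version order) version of `y` whose write is
`≤ₕ^P`-below the write `w_j(x_j)`. -/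
def maxUpTo {Obj β Trans : Type} (p : Obj → β) (h : History Obj Trans)
    (y : Obj) (l : Option Trans) (x : Obj) (j : Option Trans) : Prop :=
  ∃ jt lt' : Trans, j = some jt ∧ l = some lt' ∧
    Op.write lt' y ∈ h.ops ∧
    leP p h.toPreHistory (Op.write lt' y) (Op.write jt x) ∧
    ∀ k : Trans, Op.write k y ∈ h.ops →
      leP p h.toPreHistory (Op.write k y) (Op.write jt x) →
      ¬ h.toPreHistory.verOrd y (some lt') (some k)

/-- Compatibility, in the partitioned sense, of the two versions `x_vj` and `y_vl`
read by transaction `i`. -/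
def compatP {Obj β Trans : Type} (p : Obj → β) (h : History Obj Trans)
    (V : PDepVec p h) (i : Trans) (x : Obj) (vj : Option Trans)
    (y : Obj) (vl : Option Trans) : Prop :=
  (p x ≠ p y →
    V.pdv (Op.read i y vl) (p x) ≤ V.pdv (Op.read i x vj) (p x) ∧
    V.pdv (Op.read i x vj) (p y) ≤ V.pdv (Op.read i y vl) (p y)) ∧
  (p x = p y →
    (V.pdv (Op.read i y vl) (p y) < V.pdv (Op.read i x vj) (p y) →
      maxUpTo p h y vl x vj) ∧
    (V.pdv (Op.read i x vj) (p x) < V.pdv (Op.read i y vl) (p x) →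
      maxUpTo p h x vj y vl))

/-! By D1.2, `T j` reading a version written by `T l` puts `c_l` before `s_j`, so it suffices
to show `s_i < c_l`. If `T i`'s read precedes `c_l` this is program order. Otherwise `T l`
overwrites the object `x` whose version `x_k` was read by `T i`, with `c_k < c_l`; then D1.3
leaves only `s_i < c_l`. -/

namespace History

variable {Obj Trans : Type} (h : History Obj Trans)

theorem ne_of_read_mem {i j : Trans} {x : Obj} (hr : Op.read i x (some j) ∈ h.ops) :
    j ≠ i := by
  rintro rfl
  obtain ⟨hw, hwr⟩ := h.read_after_write j j x hr
  obtain ⟨v, hr', hrw⟩ := h.write_after_read j x hw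
  obtain rfl : v = some j := h.read_unique j x v (some j) hr' hr
  exact h.lt_irrefl _ (h.lt_trans _ _ _ hwr hrw)

end History

namespace SIWitness

variable {Obj Trans : Type} {h : History Obj Trans} (w : SIWitness h)

theorem commit_lt_snap_of_read_mem {j l : Trans} {y : Obj}
    (hr : Op.read j y (some l) ∈ h.ops) : w.slt (.op (.commit l)) (.snap j) :=
  w.d12 j l y hr (h.ne_of_read_mem hr)

theorem snap_lt_of_read_lt {i k : Trans} {x : Obj} {o : Op Obj Trans}
    (hr : Op.read i x (some k) ∈ h.ops) (hlt : h.lt (.read i x (some k)) o) :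
    w.slt (.snap i) (.op o) :=
  w.slt_trans _ _ _ (w.snap_first i _ hr rfl) (w.extends_lt _ _ hlt)

theorem snap_lt_commit_of_overwrite {i k l : Trans} {x : Obj}
    (hr : Op.read i x (some k) ∈ h.ops) (hw : Op.write l x ∈ h.ops)
    (hlt : h.lt (.commit k) (.commit l)) : w.slt (.snap i) (.op (.commit l)) := by
  have hcl : Op.commit l ∈ h.ops := (h.lt_mem _ _ hlt).2
  by_cases hli : l = i
  · subst hli
    exact w.snap_first l _ hcl rfl
  have hlk : l ≠ k := by
    rintro rfl
    exact h.lt_irrefl _ hlt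
  refine (w.d13 i k l x hr (h.ne_of_read_mem hr) hli hlk hw hcl).resolve_left fun hlk' => ?_
  exact w.slt_irrefl _ (w.slt_trans _ _ _ (w.extends_lt _ _ hlt) hlk')

end SIWitness

/-- Lemma: for a history `h` in SI with extended history `h_s` satisfying D1 and D2,
if `T i` snapshot-precedes `T j` then `s_i <_{h_s} s_j`. -/
theorem snapPrec_implies_snap_lt {Obj Trans : Type} (h : History Obj Trans)
    (w : SIWitness h) (i j : Trans) (hp : h.toPreHistory.snapPrec i j) :
    w.slt (.snap i) (.snap j) := by
  obtain ⟨k, l, x, y, hri, hrj, hcase⟩ := hp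
  have hsnap_commit : w.slt (.snap i) (.op (.commit l)) := by
    rcases hcase with hlt | ⟨hw, hlt⟩
    · exact w.snap_lt_of_read_lt hri hlt
    · exact w.snap_lt_commit_of_overwrite hri hw hlt
  exact w.slt_trans _ _ _ hsnap_commit (w.commit_lt_snap_of_read_mem hrj)
end

section
/- (Proposition, partitioned histories) Let h be a history and let P be a partition of the set of objects. If P is a proper partition of Obj for h and the history h^P belongs to CONS, then h belongs to CONS. -/
open scoped Classical

/-! Renaming objects along `p` preserves reads, writes, reads-from and the version order,
so a CONS violation in `h` is mapped to a CONS violation in `h^P`. -/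

namespace PreHistory

variable {Obj β Trans : Type}

theorem readsFrom_quot {h : PreHistory Obj Trans} (p : Obj → β) {i j : Trans}
    (hij : h.readsFrom i j) : (h.quot p).readsFrom i j :=
  let ⟨x, hx⟩ := hij
  ⟨p x, Set.mem_image_of_mem (Op.mapObj p) hx⟩

theorem dependsOn_quot {h : PreHistory Obj Trans} (p : Obj → β) {i j : Trans}
    (hij : h.dependsOn i j) : (h.quot p).dependsOn i j :=
  Relation.TransGen.mono (fun _ _ => readsFrom_quot p) _ _ hij

end PreHistory

namespace History

variable {Obj β Trans : Type}

theorem verOrd_quot (h : History Obj Trans) (p : Obj → β) {x : Obj} {v w : Option Trans}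
    (hvw : h.verOrd x v w) : (h.quot p).verOrd (p x) v w := by
  match v, w, hvw with
  | none, some _, hk => exact Set.mem_image_of_mem (Op.mapObj p) hk
  | some _, some _, hjk =>
    have ⟨hj, hk⟩ := h.lt_mem _ _ hjk
    exact ⟨_, hj, _, hk, rfl, rfl, hjk⟩

theorem seesConsistent_of_quot (h : History Obj Trans) (p : Obj → β) {i : Trans}
    (hi : (h.quot p).seesConsistent i) : h.seesConsistent i := by
  rintro ⟨k, x, j, hread, hdep, hwrite, hver⟩
  exact hi ⟨k, p x, j, Set.mem_image_of_mem (Op.mapObj p) hread,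
    PreHistory.dependsOn_quot p hdep, Set.mem_image_of_mem (Op.mapObj p) hwrite,
    h.verOrd_quot p hver⟩

end History

theorem quot_CONS_implies_CONS_general {Obj β Trans : Type} (h : History Obj Trans)
    (p : Obj → β)
    (hc : (h.toPreHistory.quot p).CONS) :
    h.toPreHistory.CONS :=
  fun i => h.seesConsistent_of_quot p (hc i)

/-- Proposition (partitioned histories): if `p` is a proper partition of the objects
for `h` and `h^P` is in CONS, then `h` is in CONS. -/
theorem quot_CONS_implies_CONS {Obj β Trans : Type} (h : History Obj Trans)
    (p : Obj → β) (hp : h.toPreHistory.ProperPartition p)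
    (hc : (h.toPreHistory.quot p).CONS) :
    h.toPreHistory.CONS :=
  quot_CONS_implies_CONS_general h p hc
end
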